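/- arXiv:2103.09204 — 2 statements merged into one kernel-verified Lean document; each statement's English description precedes it below -/
import Mathlib

section
/- For θ > 0 and c0 > c1 > 0, one has J″(s_b) > 0 and J″(s_a) < 0. Consequently, if in addition J(s_a) = a and J(s_b) = b, then J(s) = b + (J″(s_b)/2)(s − s_b)² + O((s − s_b)³) as s → s_b, and J(s) = a + (J″(s_a)/2)(s − s_a)² + O((s − s_a)³) as s → s_a. -/
open Asymptotics

/-- The map `J(s; c0, c1) = (c1*s + c0) * ((s+1)/s)^(1/θ)` for real `s`,
using the real power of the positive quantity `(s+1)/s`. -/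
noncomputable def Jmap (θ c0 c1 s : ℝ) : ℝ :=
  (c1 * s + c0) * ((s + 1) / s) ^ (1 / θ)

/-- `s_a = (1−θ)/(2θ) − (1/(2θ))·√(4θ·(c0/c1) + (1−θ)²)`. -/
noncomputable def sA (θ r : ℝ) : ℝ :=
  (1 - θ) / (2 * θ) - 1 / (2 * θ) * Real.sqrt (4 * θ * r + (1 - θ) ^ 2)

/-- `s_b = (1−θ)/(2θ) + (1/(2θ))·√(4θ·(c0/c1) + (1−θ)²)`. -/
noncomputable def sB (θ r : ℝ) : ℝ :=
  (1 - θ) / (2 * θ) + 1 / (2 * θ) * Real.sqrt (4 * θ * r + (1 - θ) ^ 2)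

/-! On `s (s + 1) > 0` one has `J' = ((s+1)/s)^(1/θ) · (c1 - (c1 s + c0) / (θ s (s+1)))`, so the
critical points are the roots of `θ s² + (θ - 1) s = c0/c1`, i.e. of
`(2θs + θ - 1)² = 4θ c0/c1 + (1-θ)²`; these are `s_a < -1` and `s_b > 0`. At a critical point the
bracket vanishes, so only its derivative contributes to `J''`, which gives
`J'' = ((s+1)/s)^(1/θ) · c1 (2θs + θ - 1) / (θ s (s+1))`, and `2θs + θ - 1 = ±√(4θ c0/c1 + (1-θ)²)`
at `s_b`, `s_a`. The expansions are the second-order Taylor formula of the real-analytic `J` at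
a critical point. -/

open Filter Topology

theorem AnalyticAt.isBigO_sub_sum_iteratedDeriv {𝕜 : Type*} [NontriviallyNormedField 𝕜]
    [CompleteSpace 𝕜] [CharZero 𝕜] {f : 𝕜 → 𝕜} {x : 𝕜} (hf : AnalyticAt 𝕜 f x) (n : ℕ) :
    (fun s => f s - ∑ k ∈ Finset.range n, iteratedDeriv k f x / k.factorial * (s - x) ^ k)
      =O[𝓝 x] fun s => (s - x) ^ n := by
  have hO := (hf.hasFPowerSeriesAt.isBigO_sub_partialSum_pow n).comp_tendsto
    (tendsto_sub_nhds_zero_iff.2 (tendsto_id (x := 𝓝 x)))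
  refine isBigO_norm_right.1 ((hO.congr_left fun s => ?_).congr_right fun s => ?_)
  · simp [FormalMultilinearSeries.partialSum, mul_comm]
  · simp

theorem AnalyticAt.isBigO_sub_sub_of_deriv_eq_zero {𝕜 : Type*} [NontriviallyNormedField 𝕜]
    [CompleteSpace 𝕜] [CharZero 𝕜] {f : 𝕜 → 𝕜} {x : 𝕜} (hf : AnalyticAt 𝕜 f x)
    (hx : deriv f x = 0) :
    (fun s => f s - f x - deriv (deriv f) x / 2 * (s - x) ^ 2) =O[𝓝 x] fun s => (s - x) ^ 3 := by
  refine (hf.isBigO_sub_sum_iteratedDeriv 3).congr_left fun s => ?_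
  simp [Finset.sum_range_succ, iteratedDeriv_succ, hx]
  ring

theorem AnalyticAt.rpow_const {E : Type*} [NormedAddCommGroup E] [NormedSpace ℝ E] {f : E → ℝ}
    {x : E} (hf : AnalyticAt ℝ f x) (hx : 0 < f x) (p : ℝ) :
    AnalyticAt ℝ (fun y => f y ^ p) x := by
  have hexp : AnalyticAt ℝ (fun y => Real.exp (Real.log (f y) * p)) x :=
    analyticAt_rexp.comp (((analyticAt_log hx).comp hf).mul analyticAt_const)
  refine hexp.congr ?_
  filter_upwards [continuousAt_const.eventually_lt hf.continuousAt hx] with y hy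
  rw [Real.rpow_def_of_pos hy]

section Jmap

variable {θ c0 c1 s : ℝ}

lemma div_pos_of_mul_add_one_pos (hs : 0 < s * (s + 1)) : 0 < (s + 1) / s := by
  rcases mul_pos_iff.1 hs with h | h
  · exact div_pos h.2 h.1
  · exact div_pos_of_neg_of_neg h.2 h.1

lemma eventually_mul_add_one_pos (hs : 0 < s * (s + 1)) : ∀ᶠ x in 𝓝 s, 0 < x * (x + 1) :=
  continuousAt_const.eventually_lt (by fun_prop) hs

lemma hasDerivAt_Jmap (hs : 0 < s * (s + 1)) :
    HasDerivAt (Jmap θ c0 c1)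
      (((s + 1) / s) ^ (1 / θ) * (c1 - (c1 * s + c0) / (θ * (s * (s + 1))))) s := by
  obtain ⟨hs0, hs1⟩ := mul_ne_zero_iff.1 hs.ne'
  have hu := div_pos_of_mul_add_one_pos hs
  have hpow := (((hasDerivAt_id' s).add_const 1).fun_div (hasDerivAt_id' s) hs0).rpow_const
    (p := 1 / θ) (Or.inl hu.ne')
  refine ((((hasDerivAt_id' s).const_mul c1).add_const c0).mul hpow).congr_deriv ?_
  rw [Real.rpow_sub hu, Real.rpow_one]
  field_simp
  ring

lemma analyticAt_Jmap (hs : 0 < s * (s + 1)) : AnalyticAt ℝ (Jmap θ c0 c1) s := by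
  have hquot : AnalyticAt ℝ (fun x => (x + 1) / x) s :=
    (analyticAt_id.add analyticAt_const).div analyticAt_id (mul_ne_zero_iff.1 hs.ne').1
  exact ((analyticAt_const.mul analyticAt_id).add analyticAt_const).mul
    (hquot.rpow_const (div_pos_of_mul_add_one_pos hs) _)

lemma deriv_Jmap_eq_zero (hθ : θ ≠ 0) (hs : 0 < s * (s + 1))
    (hcrit : c1 * s + c0 = c1 * θ * (s * (s + 1))) : deriv (Jmap θ c0 c1) s = 0 := by
  obtain ⟨hs0, hs1⟩ := mul_ne_zero_iff.1 hs.ne'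
  rw [(hasDerivAt_Jmap hs).deriv, hcrit]
  field_simp
  ring

lemma deriv_deriv_Jmap (hθ : θ ≠ 0) (hs : 0 < s * (s + 1))
    (hcrit : c1 * s + c0 = c1 * θ * (s * (s + 1))) :
    deriv (deriv (Jmap θ c0 c1)) s =
      ((s + 1) / s) ^ (1 / θ) * (c1 * (2 * θ * s + θ - 1) / (θ * (s * (s + 1)))) := by
  obtain ⟨hs0, hs1⟩ := mul_ne_zero_iff.1 hs.ne'
  have hderiv : deriv (Jmap θ c0 c1) =ᶠ[𝓝 s]
      fun x => ((x + 1) / x) ^ (1 / θ) * (c1 - (c1 * x + c0) / (θ * (x * (x + 1)))) := by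
    filter_upwards [eventually_mul_add_one_pos hs] with x hx
    exact (hasDerivAt_Jmap hx).deriv
  have hpow := (((hasDerivAt_id' s).add_const 1).fun_div (hasDerivAt_id' s) hs0).rpow_const
    (p := 1 / θ) (Or.inl (div_pos_of_mul_add_one_pos hs).ne')
  have hfactor := ((((hasDerivAt_id' s).const_mul c1).add_const c0).fun_div
    (((hasDerivAt_id' s).fun_mul ((hasDerivAt_id' s).add_const 1)).const_mul θ)
    (mul_ne_zero hθ hs.ne')).const_sub c1
  have hfactor0 : c1 - (c1 * s + c0) / (θ * (s * (s + 1))) = 0 := by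
    rw [hcrit]; field_simp; ring
  rw [hderiv.deriv_eq, (hpow.fun_mul hfactor).deriv, hfactor0, mul_zero, zero_add, hcrit]
  field_simp
  ring

end Jmap

section Roots
variable {θ r : ℝ}

lemma two_mul_mul_sB_add_sub_one (hθ : θ ≠ 0) :
    2 * θ * sB θ r + θ - 1 = √(4 * θ * r + (1 - θ) ^ 2) := by
  rw [sB]; field_simp; ring

lemma two_mul_mul_sA_add_sub_one (hθ : θ ≠ 0) :
    2 * θ * sA θ r + θ - 1 = -√(4 * θ * r + (1 - θ) ^ 2) := by
  rw [sA]; field_simp; ring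

lemma sB_pos (hθ : 0 < θ) (hr : 0 < r) : 0 < sB θ r := by
  have hlt : |1 - θ| < √(4 * θ * r + (1 - θ) ^ 2) :=
    Real.lt_sqrt (abs_nonneg _) |>.2 (by rw [sq_abs]; nlinarith [mul_pos hθ hr])
  have := two_mul_mul_sB_add_sub_one (r := r) hθ.ne'
  nlinarith [neg_abs_le (1 - θ)]

lemma sA_lt_neg_one (hθ : 0 < θ) (hr : 1 < r) : sA θ r < -1 := by
  have hlt : 1 + θ < √(4 * θ * r + (1 - θ) ^ 2) :=
    Real.lt_sqrt (by positivity) |>.2 (by nlinarith)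
  have := two_mul_mul_sA_add_sub_one (r := r) hθ.ne'
  nlinarith

lemma critical_eq_of_sq_eq {c0 c1 s : ℝ} (hθ : θ ≠ 0) (hc1 : c1 ≠ 0)
    (h : (2 * θ * s + θ - 1) ^ 2 = 4 * θ * (c0 / c1) + (1 - θ) ^ 2) :
    c1 * s + c0 = c1 * θ * (s * (s + 1)) := by
  field_simp at h
  linear_combination (norm := (field_simp; ring)) (-1 / (4 * θ)) * h

end Roots

/-- For `θ > 0` and `c0 > c1 > 0`: `J″(s_b) > 0` and `J″(s_a) < 0`; moreover, if
`J(s_a) = a` and `J(s_b) = b`, then `J(s) = b + (J″(s_b)/2)(s − s_b)² + O((s − s_b)³)`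
as `s → s_b` and `J(s) = a + (J″(s_a)/2)(s − s_a)² + O((s − s_a)³)` as `s → s_a`. -/
theorem stmt3 (θ c0 c1 a b : ℝ) (hθ : 0 < θ) (hc1 : 0 < c1) (hc01 : c1 < c0) :
    0 < deriv (deriv (Jmap θ c0 c1)) (sB θ (c0 / c1)) ∧
    deriv (deriv (Jmap θ c0 c1)) (sA θ (c0 / c1)) < 0 ∧
    (Jmap θ c0 c1 (sA θ (c0 / c1)) = a → Jmap θ c0 c1 (sB θ (c0 / c1)) = b →
      ((fun s => Jmap θ c0 c1 s - b -
          deriv (deriv (Jmap θ c0 c1)) (sB θ (c0 / c1)) / 2 * (s - sB θ (c0 / c1)) ^ 2)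
        =O[nhds (sB θ (c0 / c1))] fun s => (s - sB θ (c0 / c1)) ^ 3) ∧
      ((fun s => Jmap θ c0 c1 s - a -
          deriv (deriv (Jmap θ c0 c1)) (sA θ (c0 / c1)) / 2 * (s - sA θ (c0 / c1)) ^ 2)
        =O[nhds (sA θ (c0 / c1))] fun s => (s - sA θ (c0 / c1)) ^ 3)) := by
  set r := c0 / c1
  have hr : 1 < r := (one_lt_div hc1).2 hc01
  have hD : 0 < √(4 * θ * r + (1 - θ) ^ 2) := Real.sqrt_pos.2 (by positivity)
  have hD2 : √(4 * θ * r + (1 - θ) ^ 2) ^ 2 = 4 * θ * r + (1 - θ) ^ 2 :=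
    Real.sq_sqrt (by positivity)
  have hsB := sB_pos hθ (one_pos.trans hr)
  have hsA := sA_lt_neg_one hθ hr
  have hB : 0 < sB θ r * (sB θ r + 1) := mul_pos hsB (by linarith)
  have hA : 0 < sA θ r * (sA θ r + 1) := mul_pos_of_neg_of_neg (by linarith) (by linarith)
  have hcritB := critical_eq_of_sq_eq hθ.ne' hc1.ne'
    (by rw [two_mul_mul_sB_add_sub_one hθ.ne', hD2])
  have hcritA := critical_eq_of_sq_eq hθ.ne' hc1.ne'
    (by rw [two_mul_mul_sA_add_sub_one hθ.ne', neg_sq, hD2])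
  refine ⟨?_, ?_, fun ha hb => ⟨?_, ?_⟩⟩
  · rw [deriv_deriv_Jmap hθ.ne' hB hcritB, two_mul_mul_sB_add_sub_one hθ.ne']
    exact mul_pos (Real.rpow_pos_of_pos (div_pos_of_mul_add_one_pos hB) _) (by positivity)
  · rw [deriv_deriv_Jmap hθ.ne' hA hcritA, two_mul_mul_sA_add_sub_one hθ.ne']
    exact mul_neg_of_pos_of_neg (Real.rpow_pos_of_pos (div_pos_of_mul_add_one_pos hA) _)
      (div_neg_of_neg_of_pos (mul_neg_of_pos_of_neg hc1 (neg_neg_of_pos hD)) (by positivity))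
  · exact hb ▸ (analyticAt_Jmap hB).isBigO_sub_sub_of_deriv_eq_zero
      (deriv_Jmap_eq_zero hθ.ne' hB hcritB)
  · exact ha ▸ (analyticAt_Jmap hA).isBigO_sub_sub_of_deriv_eq_zero
      (deriv_Jmap_eq_zero hθ.ne' hA hcritA)
end

section
/- For θ > 0 and c0 > c1 > 0, the identity (1/J(s))·(1 + d_a/(s − s_a) + d_b/(s − s_b)) = 1/(s·J′(s)) holds for every s ∈ ℂ ∖ [−1, 0] with s ∉ {s_a, s_b} and J(s) ≠ 0. (Equivalently, writing z = J(s) and s = I_k(z) for an inverse branch of J, this is the identity 1/z + (d_a/z)·1/(I_k(z) − s_a) + (d_b/z)·1/(I_k(z) − s_b) = I_k′(z)/I_k(z).) -/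
/-- The complex map `J(s; c0, c1) = (c1*s + c0) * ((s+1)/s)^(1/θ)`, analytic on
`ℂ ∖ [−1, 0]`, using the principal branch of the complex power; this is the
branch with `J(s) = c1·s·(1 + O(1/s))` as `s → ∞`. -/
noncomputable def JmapC (θ c0 c1 : ℝ) (s : ℂ) : ℂ :=
  ((c1 : ℂ) * s + (c0 : ℂ)) * ((s + 1) / s) ^ (((1 / θ : ℝ)) : ℂ)

/-- The segment `[−1, 0]` viewed as a subset of `ℂ`. -/
def seg : Set ℂ := {z : ℂ | z.im = 0 ∧ -1 ≤ z.re ∧ z.re ≤ 0}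

/-!
Write `J = (c1 s + c0) F` with `F = ((s + 1) / s) ^ (1 / θ)`. Logarithmic differentiation gives
`s J'/J = c1 s / (c1 s + c0) - 1 / (θ (s + 1))`, whose numerator `c1 θ s² - (1 - θ) c1 s - c0`
has the roots `s_a, s_b`. Hence `1 / (s J') = (1 / J) (s + 1)(s + c0/c1) / ((s - s_a)(s - s_b))`,
and since `c0 / c1 = -θ s_a s_b` the numbers `d_a, d_b` are the residues of this rational function.
-/

open Complex

lemma sA_add_sB {θ : ℝ} (hθ : θ ≠ 0) (r : ℝ) : (sA θ r + sB θ r) * θ = 1 - θ := by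
  unfold sA sB; field_simp; ring

lemma sA_mul_sB {θ r : ℝ} (hθ : θ ≠ 0) (hdisc : 0 ≤ 4 * θ * r + (1 - θ) ^ 2) :
    sA θ r * sB θ r * θ = -r := by
  unfold sA sB
  have hD := Real.sq_sqrt hdisc
  generalize Real.sqrt _ = D at hD ⊢
  field_simp
  linear_combination -hD

lemma sA_mul_sB_mul {θ c0 c1 : ℝ} (hθ : θ ≠ 0) (hc1 : c1 ≠ 0)
    (hdisc : 0 ≤ 4 * θ * (c0 / c1) + (1 - θ) ^ 2) :
    sA θ (c0 / c1) * sB θ (c0 / c1) * θ * c1 = -c0 := by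
  rw [sA_mul_sB hθ hdisc]
  field_simp

lemma sA_lt_sB {θ r : ℝ} (hθ : 0 < θ) (hdisc : 0 < 4 * θ * r + (1 - θ) ^ 2) :
    sA θ r < sB θ r := by
  unfold sA sB
  have : 0 < 1 / (2 * θ) * Real.sqrt (4 * θ * r + (1 - θ) ^ 2) := by positivity
  linarith

lemma ne_zero_of_notMem_seg {s : ℂ} (hs : s ∉ seg) : s ≠ 0 := by
  rintro rfl; exact hs (by simp [seg])

lemma add_one_ne_zero_of_notMem_seg {s : ℂ} (hs : s ∉ seg) : s + 1 ≠ 0 := by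
  intro h
  rw [add_eq_zero_iff_eq_neg.mp h] at hs
  exact hs (by simp [seg])

lemma add_one_div_mem_slitPlane {s : ℂ} (hs : s ∉ seg) : (s + 1) / s ∈ slitPlane := by
  have hs0 := ne_zero_of_notMem_seg hs
  rw [mem_slitPlane_iff]
  by_contra! h
  obtain ⟨hre, him⟩ := h
  set x := ((s + 1) / s).re
  have hw : (s + 1) / s = x := ext rfl him
  have hx1 : x - 1 ≠ 0 := by linarith
  have hsx : s = ((1 / (x - 1) : ℝ) : ℂ) := by
    rw [div_eq_iff hs0] at hw
    push_cast
    rw [eq_div_iff (by exact_mod_cast hx1)]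
    linear_combination -hw
  refine hs ⟨by simp [hsx], ?_, ?_⟩ <;> rw [hsx, ofReal_re]
  · rw [le_div_iff_of_neg (by linarith)]; linarith
  · exact div_nonpos_of_nonneg_of_nonpos zero_le_one (by linarith)

lemma hasDerivAt_JmapC (θ c0 c1 : ℝ) {s : ℂ} (hs : s ∉ seg) :
    HasDerivAt (JmapC θ c0 c1)
      (((s + 1) / s) ^ ((1 / θ : ℝ) : ℂ) *
        (c1 - ((1 / θ : ℝ) : ℂ) * (c1 * s + c0) / (s * (s + 1)))) s := by
  have hs0 := ne_zero_of_notMem_seg hs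
  have hs1 := add_one_ne_zero_of_notMem_seg hs
  have hlin : HasDerivAt (fun s : ℂ ↦ c1 * s + c0) c1 s := by
    simpa using ((hasDerivAt_id s).const_mul (c1 : ℂ)).add_const (c0 : ℂ)
  have hbase : HasDerivAt (fun s : ℂ ↦ (s + 1) / s) ((1 * s - (s + 1) * 1) / s ^ 2) s :=
    ((hasDerivAt_id s).add_const 1).div (hasDerivAt_id s) hs0
  refine (hlin.mul (hbase.cpow_const (add_one_div_mem_slitPlane hs))).congr_deriv ?_
  rw [cpow_sub _ _ (div_ne_zero hs1 hs0), cpow_one]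
  field_simp
  ring

lemma div_sub_mul_sub_eq_one_add_div_sub_add_div_sub (θ : ℂ) {A B s : ℂ} (hAB : A ≠ B)
    (hA : s ≠ A) (hB : s ≠ B) :
    (s + 1) * (s - A * B * θ) / ((s - A) * (s - B)) =
      1 + A * (1 + A) * (B * θ - 1) / (B - A) / (s - A) +
        B * (1 + B) * (1 - A * θ) / (B - A) / (s - B) := by
  have hA' := sub_ne_zero.mpr hA
  have hB' := sub_ne_zero.mpr hB
  have hAB' := sub_ne_zero.mpr hAB.symm
  field_simp
  ring

lemma mul_deriv_JmapC {θ c0 c1 : ℝ} (hθ : θ ≠ 0) (hc1 : c1 ≠ 0)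
    (hdisc : 0 ≤ 4 * θ * (c0 / c1) + (1 - θ) ^ 2) {s : ℂ} (hs : s ∉ seg) :
    s * deriv (JmapC θ c0 c1) s = ((s + 1) / s) ^ ((1 / θ : ℝ) : ℂ) *
      (c1 * (s - sA θ (c0 / c1)) * (s - sB θ (c0 / c1)) / (s + 1)) := by
  have hs0 := ne_zero_of_notMem_seg hs
  have hs1 := add_one_ne_zero_of_notMem_seg hs
  have hθ' : (θ : ℂ) ≠ 0 := by exact_mod_cast hθ
  have hsum : ((sA θ (c0 / c1) : ℂ) + sB θ (c0 / c1)) * θ = 1 - θ := by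
    exact_mod_cast sA_add_sB hθ (c0 / c1)
  have hprod : (sA θ (c0 / c1) : ℂ) * sB θ (c0 / c1) * θ * c1 = -c0 := by
    exact_mod_cast sA_mul_sB_mul hθ hc1 hdisc
  rw [(hasDerivAt_JmapC θ c0 c1 hs).deriv, mul_left_comm]
  congr 1
  push_cast
  field_simp
  linear_combination (c1 * s) * hsum - hprod

/-- For `θ > 0`, `c0 > c1 > 0`, and every `s ∈ ℂ ∖ [−1, 0]` with `s ∉ {s_a, s_b}`
and `J(s) ≠ 0`:
`(1/J(s))·(1 + d_a/(s − s_a) + d_b/(s − s_b)) = 1/(s·J′(s))`, where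
`d_a = s_a(1+s_a)(s_b·θ − 1)/(s_b − s_a)` and `d_b = s_b(1+s_b)(1 − s_a·θ)/(s_b − s_a)`. -/
theorem stmt5 (θ c0 c1 : ℝ) (hθ : 0 < θ) (hc1 : 0 < c1) (hc01 : c1 < c0)
    (s : ℂ) (hs : s ∉ seg)
    (hsa : s ≠ ((sA θ (c0 / c1) : ℝ) : ℂ)) (hsb : s ≠ ((sB θ (c0 / c1) : ℝ) : ℂ))
    (hJ : JmapC θ c0 c1 s ≠ 0) :
    (1 / JmapC θ c0 c1 s) *
      (1 + ((sA θ (c0 / c1) * (1 + sA θ (c0 / c1)) * (sB θ (c0 / c1) * θ - 1) /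
              (sB θ (c0 / c1) - sA θ (c0 / c1)) : ℝ) : ℂ) / (s - ((sA θ (c0 / c1) : ℝ) : ℂ))
         + ((sB θ (c0 / c1) * (1 + sB θ (c0 / c1)) * (1 - sA θ (c0 / c1) * θ) /
              (sB θ (c0 / c1) - sA θ (c0 / c1)) : ℝ) : ℂ) / (s - ((sB θ (c0 / c1) : ℝ) : ℂ)))
      = 1 / (s * deriv (JmapC θ c0 c1) s) := by
  have hθ0 : θ ≠ 0 := hθ.ne'
  have hdisc : 0 < 4 * θ * (c0 / c1) + (1 - θ) ^ 2 := by
    have := div_pos (hc1.trans hc01) hc1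
    positivity
  have hprod : (sA θ (c0 / c1) : ℂ) * sB θ (c0 / c1) * θ * c1 = -c0 := by
    exact_mod_cast sA_mul_sB_mul hθ0 hc1.ne' hdisc.le
  have hAB : (sA θ (c0 / c1) : ℂ) ≠ sB θ (c0 / c1) := by
    exact_mod_cast (sA_lt_sB hθ hdisc).ne
  have hc1' : (c1 : ℂ) ≠ 0 := by exact_mod_cast hc1.ne'
  rw [mul_deriv_JmapC hθ0 hc1.ne' hdisc.le hs]
  unfold JmapC at hJ ⊢
  obtain ⟨hq, hF⟩ := mul_ne_zero_iff.mp hJ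
  push_cast at hF ⊢
  rw [← div_sub_mul_sub_eq_one_add_div_sub_add_div_sub _ hAB hsa hsb]
  field_simp
  linear_combination -(s + 1) * hprod
end
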